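/- arXiv:2201.00653 — 3 statements merged into one kernel-verified Lean document; each statement's English description precedes it below -/
import Mathlib

section
/- Let k be a finite field with q elements, λ ∈ GL_n(k), and ℱ ⊆ k[x_1,…,x_n] a finite set of polynomials. Let ℰ = {x_i^q − x_i : i = 1,…,n} be the set of field equations. Then the last fall degree of λ*(ℱ) ∪ ℰ equals the last fall degree of ℱ ∪ ℰ: d_{λ*(ℱ)∪ℰ} = d_{ℱ∪ℰ}. -/
open MvPolynomial

/-- Linear change of variables: `f ∘ λ`, substituting `xᵢ ↦ ℓᵢ(x) = ∑ⱼ Mᵢⱼ xⱼ`. -/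
noncomputable def polyComp {n : ℕ} {K : Type*} [CommRing K]
    (M : Matrix (Fin n) (Fin n) K) (f : MvPolynomial (Fin n) K) :
    MvPolynomial (Fin n) K :=
  aeval (fun i => ∑ j, C (M i j) * X j) f

/-- `V_{ℱ,i}`: the smallest `K`-subspace of `K[x]` containing every `f ∈ ℱ` of degree
`≤ i` and closed under multiplication by polynomials as long as the degree stays `≤ i`. -/
noncomputable def Vsp {σ K : Type*} [Field K]
    (F : Set (MvPolynomial σ K)) (i : ℕ) : Submodule K (MvPolynomial σ K) :=
  sInf {V : Submodule K (MvPolynomial σ K) |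
    (∀ f ∈ F, f.totalDegree ≤ i → f ∈ V) ∧
    ∀ g ∈ V, ∀ h : MvPolynomial σ K, (h * g).totalDegree ≤ i → h * g ∈ V}

/-- The last fall degree `d_ℱ`: the largest `e` such that
`V_{ℱ,e} ∩ R_{≤ e-1} ≠ V_{ℱ,e-1}`. -/
noncomputable def lastFallDegree {σ K : Type*} [Field K]
    (F : Set (MvPolynomial σ K)) : ℕ :=
  sSup {e : ℕ | Vsp F e ⊓ restrictTotalDegree σ K (e - 1) ≠ Vsp F (e - 1)}

section Aux

variable {n : ℕ} {K : Type*} [CommRing K]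

lemma polyComp_one (f : MvPolynomial (Fin n) K) : polyComp 1 f = f := by
  have h : (fun i : Fin n => ∑ j, C ((1 : Matrix (Fin n) (Fin n) K) i j) * X j)
      = (X : Fin n → MvPolynomial (Fin n) K) := by
    funext i
    simp [Matrix.one_apply, apply_ite (C (σ := Fin n)), ite_mul, Finset.sum_ite_eq]
  rw [polyComp, h, aeval_X_left_apply]

lemma polyComp_polyComp (M N : Matrix (Fin n) (Fin n) K) (f : MvPolynomial (Fin n) K) :
    polyComp M (polyComp N f) = polyComp (N * M) f := by
  have h : ((aeval fun i => ∑ j, C (M i j) * X j :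
        MvPolynomial (Fin n) K →ₐ[K] MvPolynomial (Fin n) K).comp
      (aeval fun i => ∑ j, C (N i j) * X j))
      = aeval (fun i => ∑ j, C ((N * M) i j) * X j) := by
    apply algHom_ext
    intro i
    simp only [AlgHom.comp_apply, aeval_X, map_sum, map_mul, aeval_C,
      algebraMap_eq, Matrix.mul_apply, Finset.sum_mul, Finset.mul_sum, map_sum, C_mul,
      mul_assoc]
    rw [Finset.sum_comm]
  simpa [polyComp] using DFunLike.congr_fun h f

lemma totalDegree_polyComp_le [Nontrivial K] (M : Matrix (Fin n) (Fin n) K)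
    (f : MvPolynomial (Fin n) K) :
    (polyComp M f).totalDegree ≤ f.totalDegree := by
  rw [polyComp]
  conv_lhs => rw [f.as_sum]
  rw [map_sum]
  apply totalDegree_finsetSum_le
  intro d hd
  rw [aeval_monomial]
  refine (totalDegree_mul _ _).trans ?_
  have h0 : (algebraMap K (MvPolynomial (Fin n) K) (coeff d f)).totalDegree = 0 := by
    rw [algebraMap_eq, totalDegree_C]
  rw [h0, zero_add]
  refine le_trans ?_ (le_totalDegree hd)
  rw [Finsupp.prod, Finsupp.sum]
  refine (totalDegree_finset_prod _ _).trans ?_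
  apply Finset.sum_le_sum
  intro i _
  refine (totalDegree_pow _ _).trans ?_
  have h1 : (∑ j, C (M i j) * X j : MvPolynomial (Fin n) K).totalDegree ≤ 1 := by
    refine (totalDegree_finset_sum _ _).trans (Finset.sup_le fun j _ => ?_)
    refine (totalDegree_mul _ _).trans ?_
    rw [totalDegree_C, totalDegree_X]
  calc d i * (∑ j, C (M i j) * X j : MvPolynomial (Fin n) K).totalDegree
      ≤ d i * 1 := Nat.mul_le_mul_left _ h1
    _ = d i := Nat.mul_one _

end Aux

lemma polyComp_fieldEq {n : ℕ} {k : Type*} [Field k] [Fintype k] {q : ℕ}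
    (hq : Fintype.card k = q) (M : Matrix (Fin n) (Fin n) k) (a : Fin n) :
    polyComp M ((X a : MvPolynomial (Fin n) k) ^ q - X a)
      = ∑ j, C (M a j) * ((X j : MvPolynomial (Fin n) k) ^ q - X j) := by
  obtain ⟨p, hchar⟩ := CharP.exists k
  haveI := hchar
  obtain ⟨m, hp, hm⟩ := FiniteField.card k p
  haveI : Fact p.Prime := ⟨hp⟩
  subst hq
  rw [polyComp, map_sub, map_pow, aeval_X]
  have hpow : (∑ j, C (M a j) * X j : MvPolynomial (Fin n) k) ^ Fintype.card k
      = ∑ j, C (M a j) * (X j : MvPolynomial (Fin n) k) ^ Fintype.card k := by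
    rw [hm, sum_pow_char_pow]
    refine Finset.sum_congr rfl fun j _ => ?_
    rw [mul_pow, ← C_pow, ← hm, FiniteField.pow_card]
  rw [hpow, ← Finset.sum_sub_distrib]
  exact Finset.sum_congr rfl fun j _ => (mul_sub _ _ _).symm

lemma totalDegree_fieldEq {σ K : Type*} [DecidableEq σ] [CommRing K] [Nontrivial K] {q : ℕ}
    (hq2 : 2 ≤ q) (a : σ) :
    ((X a : MvPolynomial σ K) ^ q - X a).totalDegree = q := by
  apply le_antisymm
  · refine (totalDegree_sub _ _).trans ?_
    rw [totalDegree_X_pow, totalDegree_X]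
    omega
  · have hmem : Finsupp.single a q ∈ ((X a : MvPolynomial σ K) ^ q - X a).support := by
      rw [mem_support_iff, coeff_sub]
      have h1 : coeff (Finsupp.single a q) ((X a : MvPolynomial σ K) ^ q) = 1 := by
        rw [coeff_X_pow]; simp
      have h2 : coeff (Finsupp.single a q) (X a : MvPolynomial σ K) = 0 := by
        rw [show (X a : MvPolynomial σ K) = X a ^ 1 by rw [pow_one], coeff_X_pow]
        rw [if_neg]
        intro hcontra
        have := DFunLike.congr_fun hcontra a
        simp only [Finsupp.single_eq_same] at this
        omega
      rw [h1, h2, sub_zero]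
      exact one_ne_zero
    have := le_totalDegree hmem
    rwa [Finsupp.sum_single_index rfl] at this

lemma Vsp_props {σ K : Type*} [Field K] (F : Set (MvPolynomial σ K)) (i : ℕ) :
    (∀ f ∈ F, f.totalDegree ≤ i → f ∈ Vsp F i) ∧
    ∀ g ∈ Vsp F i, ∀ h : MvPolynomial σ K, (h * g).totalDegree ≤ i → h * g ∈ Vsp F i := by
  constructor
  · intro f hf hdeg
    rw [Vsp, Submodule.mem_sInf]
    intro V hV
    exact hV.1 f hf hdeg
  · intro g hg h hdeg
    rw [Vsp, Submodule.mem_sInf] at hg ⊢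
    intro V hV
    exact hV.2 g (hg V hV) h hdeg

/-- `polyComp` as a linear map. -/
noncomputable def polyCompL {n : ℕ} {k : Type*} [Field k] (M : Matrix (Fin n) (Fin n) k) :
    MvPolynomial (Fin n) k →ₗ[k] MvPolynomial (Fin n) k :=
  (aeval fun i => ∑ j, C (M i j) * X j).toLinearMap

@[simp] lemma polyCompL_apply {n : ℕ} {k : Type*} [Field k]
    (M : Matrix (Fin n) (Fin n) k) (f : MvPolynomial (Fin n) k) :
    polyCompL M f = polyComp M f := rfl

lemma Vsp_le_comap {n q : ℕ} {k : Type*} [Field k] [Fintype k]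
    (hq : Fintype.card k = q) (M : Matrix (Fin n) (Fin n) k)
    (F : Set (MvPolynomial (Fin n) k)) (i : ℕ) :
    Vsp (F ∪ Set.range fun a : Fin n => (X a : MvPolynomial (Fin n) k) ^ q - X a) i ≤
      Submodule.comap (polyCompL M)
        (Vsp ((polyComp M '' F) ∪
          Set.range fun a : Fin n => (X a : MvPolynomial (Fin n) k) ^ q - X a) i) := by
  have hq2 : 2 ≤ q := hq ▸ Fintype.one_lt_card
  apply sInf_le
  constructor
  · rintro f (hf | ⟨a, rfl⟩) hdeg
    · exact (Vsp_props _ _).1 _ (Or.inl ⟨f, hf, rfl⟩)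
        ((totalDegree_polyComp_le M f).trans hdeg)
    · rw [Submodule.mem_comap, polyCompL_apply, polyComp_fieldEq hq]
      apply Submodule.sum_mem
      intro j _
      rw [C_mul']
      apply Submodule.smul_mem
      apply (Vsp_props _ _).1 _ (Or.inr ⟨j, rfl⟩)
      rwa [totalDegree_fieldEq hq2] at hdeg ⊢
  · intro g hg h hdeg
    rw [Submodule.mem_comap, polyCompL_apply] at hg ⊢
    rw [show polyComp M (h * g) = polyComp M h * polyComp M g from map_mul _ _ _]
    refine (Vsp_props _ _).2 _ hg _ ?_
    rw [show polyComp M h * polyComp M g = polyComp M (h * g) from (map_mul _ _ _).symm]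
    exact (totalDegree_polyComp_le M _).trans hdeg

/-- Over a finite field `k` with `q` elements, with `ℰ` the set of
field equations `xᵢ^q - xᵢ`, the last fall degree of `λ*(ℱ) ∪ ℰ` equals the last fall
degree of `ℱ ∪ ℰ` for any `λ ∈ GLₙ(k)`. -/
theorem lastFallDegree_field_equations_invariant
    (k : Type*) [Field k] [Fintype k] (q n : ℕ) (hq : Fintype.card k = q)
    (lam : GL (Fin n) k)
    (F : Set (MvPolynomial (Fin n) k)) (hFfin : F.Finite) :
    lastFallDegree
        ((polyComp (lam : Matrix (Fin n) (Fin n) k) '' F) ∪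
          Set.range (fun i : Fin n => (X i : MvPolynomial (Fin n) k) ^ q - X i)) =
      lastFallDegree
        (F ∪ Set.range (fun i : Fin n => (X i : MvPolynomial (Fin n) k) ^ q - X i)) := by
  set E : Set (MvPolynomial (Fin n) k) :=
    Set.range (fun i : Fin n => (X i : MvPolynomial (Fin n) k) ^ q - X i) with hE
  set M : Matrix (Fin n) (Fin n) k := (lam : Matrix (Fin n) (Fin n) k) with hM
  set M' : Matrix (Fin n) (Fin n) k := ((lam⁻¹ : GL (Fin n) k) : Matrix (Fin n) (Fin n) k)
    with hM'
  have hMM' : M * M' = 1 := lam.mul_inv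
  have hM'M : M' * M = 1 := lam.inv_mul
  have hid1 : ∀ f : MvPolynomial (Fin n) k, polyComp M (polyComp M' f) = f := fun f => by
    rw [polyComp_polyComp, hM'M, polyComp_one]
  have hid2 : ∀ f : MvPolynomial (Fin n) k, polyComp M' (polyComp M f) = f := fun f => by
    rw [polyComp_polyComp, hMM', polyComp_one]
  have hdeg : ∀ f : MvPolynomial (Fin n) k,
      (polyComp M' f).totalDegree = f.totalDegree := by
    intro f
    refine le_antisymm (totalDegree_polyComp_le _ _) ?_
    calc f.totalDegree = (polyComp M (polyComp M' f)).totalDegree := by rw [hid1]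
      _ ≤ (polyComp M' f).totalDegree := totalDegree_polyComp_le _ _
  have himg : polyComp M' '' (polyComp M '' F) = F := by
    rw [← Set.image_comp]
    have : (polyComp M' ∘ polyComp M) '' F = id '' F :=
      Set.image_congr fun f _ => hid2 f
    rw [this, Set.image_id]
  have key : ∀ i, Vsp ((polyComp M '' F) ∪ E) i
      = Submodule.comap (polyCompL M') (Vsp (F ∪ E) i) := by
    intro i
    apply le_antisymm
    · have h1 := Vsp_le_comap hq M' (polyComp M '' F) i
      rwa [himg] at h1
    · have h2 := Submodule.comap_mono (f := polyCompL M') (Vsp_le_comap hq M F i)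
      refine le_trans h2 ?_
      rw [← Submodule.comap_comp]
      have hcomp : (polyCompL M).comp (polyCompL M') = LinearMap.id :=
        LinearMap.ext fun f => hid1 f
      rw [hcomp, Submodule.comap_id]
  have keyR : ∀ m, restrictTotalDegree (Fin n) k m
      = Submodule.comap (polyCompL M') (restrictTotalDegree (Fin n) k m) := by
    intro m
    ext f
    simp only [Submodule.mem_comap, mem_restrictTotalDegree, polyCompL_apply, hdeg]
  have hsurj : Function.Surjective (polyCompL M') := fun f => ⟨polyComp M f, hid2 f⟩
  have hinj := Submodule.comap_injective_of_surjective hsurj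
  unfold lastFallDegree
  congr 1
  ext e
  simp only [Set.mem_setOf_eq]
  rw [key, key]
  have h3 : Submodule.comap (polyCompL M') (Vsp (F ∪ E) e) ⊓
        restrictTotalDegree (Fin n) k (e - 1)
      = Submodule.comap (polyCompL M')
        (Vsp (F ∪ E) e ⊓ restrictTotalDegree (Fin n) k (e - 1)) := by
    rw [Submodule.comap_inf, ← keyR]
  rw [h3]
  exact not_congr hinj.eq_iff
end

section
/- Let k be a finite field with q = p^m elements, p prime. Work in the polynomial ring k[x_{ij} : i = 1,…,n, j = 0,…,m−1], identifying a polynomial g(x_1,…,x_n) ∈ k[x_1,…,x_n] with g(x_{10},…,x_{n0}). Let ℰ' = {x_{ij}^p − x_{i,j+1} : i = 1,…,n, j = 0,…,m−1}, indices j+1 taken mod m. Then for any λ ∈ GL_n(k) and any finite ℱ ⊆ k[x_1,…,x_n], the last fall degrees satisfy d_{ℱ∪ℰ'} = d_{λ*(ℱ)∪ℰ'}. -/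
open MvPolynomial

section VspLemmas

variable {σ K : Type*} [Field K]

lemma Vsp_mem_of_mem {F : Set (MvPolynomial σ K)} {i : ℕ} {f : MvPolynomial σ K}
    (hf : f ∈ F) (hd : f.totalDegree ≤ i) : f ∈ Vsp F i :=
  Submodule.mem_sInf.2 fun _ hV => hV.1 f hf hd

lemma Vsp_mul_mem {F : Set (MvPolynomial σ K)} {i : ℕ} {g : MvPolynomial σ K}
    (hg : g ∈ Vsp F i) (h : MvPolynomial σ K) (hd : (h * g).totalDegree ≤ i) :
    h * g ∈ Vsp F i :=
  Submodule.mem_sInf.2 fun V hV => hV.2 g (Submodule.mem_sInf.1 hg V hV) h hd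

lemma Vsp_le {F G : Set (MvPolynomial σ K)} {i : ℕ}
    (h : ∀ f ∈ G, f.totalDegree ≤ i → f ∈ Vsp F i) : Vsp G i ≤ Vsp F i :=
  sInf_le ⟨h, fun g hg => Vsp_mul_mem hg⟩

lemma Vsp_congr {F G : Set (MvPolynomial σ K)} {i : ℕ}
    (h1 : ∀ f ∈ F, f.totalDegree ≤ i → f ∈ Vsp G i)
    (h2 : ∀ f ∈ G, f.totalDegree ≤ i → f ∈ Vsp F i) : Vsp F i = Vsp G i :=
  le_antisymm (Vsp_le h1) (Vsp_le h2)

variable (φ : MvPolynomial σ K ≃ₐ[K] MvPolynomial σ K)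
  (hdeg : ∀ f : MvPolynomial σ K, (φ f).totalDegree = f.totalDegree)

include hdeg in
lemma Vsp_map (F : Set (MvPolynomial σ K)) (i : ℕ) :
    Vsp ((⇑φ) '' F) i = (Vsp F i).map φ.toLinearMap := by
  refine le_antisymm (sInf_le ⟨?_, ?_⟩) ?_
  · rintro f' ⟨f, hf, rfl⟩ hd
    rw [hdeg] at hd
    exact Submodule.mem_map.2 ⟨f, Vsp_mem_of_mem hf hd, rfl⟩
  · rintro g hg h hd
    obtain ⟨g', hg', rfl⟩ := Submodule.mem_map.1 hg
    simp only [AlgEquiv.toLinearMap_apply] at hd ⊢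
    have key : h * φ g' = φ (φ.symm h * g') := by
      rw [map_mul, AlgEquiv.apply_symm_apply]
    have hd' : (φ.symm h * g').totalDegree ≤ i := by
      rw [← hdeg (φ.symm h * g'), ← key]; exact hd
    rw [key]
    exact Submodule.mem_map.2 ⟨_, Vsp_mul_mem hg' _ hd', rfl⟩
  · rw [Submodule.map_le_iff_le_comap]
    refine sInf_le ⟨?_, ?_⟩
    · intro f hf hd
      rw [Submodule.mem_comap, AlgEquiv.toLinearMap_apply]
      exact Vsp_mem_of_mem (Set.mem_image_of_mem _ hf) (by rwa [hdeg])
    · intro g hg h hd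
      rw [Submodule.mem_comap, AlgEquiv.toLinearMap_apply] at hg ⊢
      have key : φ (h * g) = φ h * φ g := map_mul φ h g
      rw [key]
      refine Vsp_mul_mem hg (φ h) ?_
      rw [← key, hdeg]; exact hd

include hdeg in
lemma restrict_map_eq (d : ℕ) :
    (restrictTotalDegree σ K d).map φ.toLinearMap = restrictTotalDegree σ K d := by
  ext f
  simp only [Submodule.mem_map, mem_restrictTotalDegree]
  constructor
  · rintro ⟨g, hg, rfl⟩
    simpa only [AlgEquiv.toLinearMap_apply, hdeg] using hg
  · intro hf
    refine ⟨φ.symm f, ?_, by simp⟩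
    have := hdeg (φ.symm f)
    rw [AlgEquiv.apply_symm_apply] at this
    omega

include hdeg in
lemma lastFallDegree_map (F : Set (MvPolynomial σ K)) :
    lastFallDegree ((⇑φ) '' F) = lastFallDegree F := by
  have hinj : Function.Injective φ.toLinearMap := fun a b hab => φ.injective (by simpa using hab)
  unfold lastFallDegree
  congr 1
  ext e
  simp only [Set.mem_setOf_eq]
  have h1 : Submodule.map φ.toLinearMap (Vsp F e ⊓ restrictTotalDegree σ K (e - 1)) =
      Submodule.map φ.toLinearMap (Vsp F e) ⊓ restrictTotalDegree σ K (e - 1) := by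
    rw [Submodule.map_inf φ.toLinearMap hinj, restrict_map_eq φ hdeg]
  rw [Vsp_map φ hdeg, Vsp_map φ hdeg, ← h1]
  exact not_congr (Submodule.map_injective_of_injective hinj).eq_iff

lemma lastFallDegree_congr {F G : Set (MvPolynomial σ K)}
    (h : ∀ i, Vsp F i = Vsp G i) : lastFallDegree F = lastFallDegree G := by
  unfold lastFallDegree
  congr 1
  ext e
  simp only [Set.mem_setOf_eq, h]

end VspLemmas

section Psi

variable {k : Type*} [Field k] {n m : ℕ}

/-- Level-wise linear substitution on the variables `x_{ij}`. -/
noncomputable def psiHom (B : Fin m → Matrix (Fin n) (Fin n) k) :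
    MvPolynomial (Fin n × Fin m) k →ₐ[k] MvPolynomial (Fin n × Fin m) k :=
  aeval fun x => ∑ l, C (B x.2 x.1 l) * X (l, x.2)

lemma psiHom_X (B : Fin m → Matrix (Fin n) (Fin n) k) (x : Fin n × Fin m) :
    psiHom B (X x) = ∑ l, C (B x.2 x.1 l) * X (l, x.2) :=
  aeval_X _ x

lemma psiHom_C (B : Fin m → Matrix (Fin n) (Fin n) k) (a : k) :
    psiHom B (C a) = C a := by
  simp [psiHom, algebraMap_eq]

lemma psiHom_comp (B B' : Fin m → Matrix (Fin n) (Fin n) k) :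
    (psiHom B).comp (psiHom B') = psiHom fun j => B' j * B j := by
  apply algHom_ext
  intro x
  simp only [AlgHom.comp_apply, psiHom_X, map_sum, map_mul, psiHom_C,
    Matrix.mul_apply, Finset.mul_sum, Finset.sum_mul, map_sum, mul_assoc]
  exact Finset.sum_comm

lemma psiHom_id : psiHom (fun _ => (1 : Matrix (Fin n) (Fin n) k)) =
    AlgHom.id k (MvPolynomial (Fin n × Fin m) k) := by
  apply algHom_ext
  intro x
  simp [psiHom_X, Matrix.one_apply, apply_ite C, ite_mul, Finset.sum_ite_eq]

/-- `psiHom` for invertible levelwise matrices as an algebra equivalence. -/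
noncomputable def psiEquiv (B B' : Fin m → Matrix (Fin n) (Fin n) k)
    (h1 : ∀ j, B' j * B j = 1) (h2 : ∀ j, B j * B' j = 1) :
    MvPolynomial (Fin n × Fin m) k ≃ₐ[k] MvPolynomial (Fin n × Fin m) k :=
  AlgEquiv.ofAlgHom (psiHom B) (psiHom B')
    (by rw [psiHom_comp]; rw [show (fun j => B' j * B j) = fun _ => (1 : Matrix (Fin n) (Fin n) k) from funext h1]; exact psiHom_id)
    (by rw [psiHom_comp]; rw [show (fun j => B j * B' j) = fun _ => (1 : Matrix (Fin n) (Fin n) k) from funext h2]; exact psiHom_id)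

lemma totalDegree_aeval_le' {σ τ : Type*} (g : σ → MvPolynomial τ k)
    (hg : ∀ x, (g x).totalDegree ≤ 1) (f : MvPolynomial σ k) :
    ((aeval g) f).totalDegree ≤ f.totalDegree := by
  conv_lhs => rw [f.as_sum]
  rw [map_sum]
  refine (totalDegree_finset_sum _ _).trans (Finset.sup_le ?_)
  intro s hs
  rw [aeval_monomial]
  refine (totalDegree_mul _ _).trans ?_
  rw [algebraMap_eq, totalDegree_C, zero_add]
  refine le_trans ?_ (le_totalDegree hs)
  rw [Finsupp.prod, Finsupp.sum]
  refine (totalDegree_finset_prod _ _).trans (Finset.sum_le_sum fun i _ => ?_)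
  refine (totalDegree_pow _ _).trans ?_
  calc s i * (g i).totalDegree ≤ s i * 1 := Nat.mul_le_mul_left _ (hg i)
    _ = s i := mul_one _

lemma psiHom_deg_le (B : Fin m → Matrix (Fin n) (Fin n) k) (f : MvPolynomial (Fin n × Fin m) k) :
    (psiHom B f).totalDegree ≤ f.totalDegree := by
  refine totalDegree_aeval_le' _ (fun x => ?_) f
  refine (totalDegree_finset_sum _ _).trans (Finset.sup_le fun l _ => ?_)
  refine (totalDegree_mul _ _).trans ?_
  simp [totalDegree_C, totalDegree_X]

lemma psiHom_inv_apply (B B' : Fin m → Matrix (Fin n) (Fin n) k)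
    (h2 : ∀ j, B j * B' j = 1) (f : MvPolynomial (Fin n × Fin m) k) :
    psiHom B' (psiHom B f) = f := by
  have hcomp := psiHom_comp B' B
  rw [show (fun j => B j * B' j) = fun _ => (1 : Matrix (Fin n) (Fin n) k) from funext h2,
    psiHom_id] at hcomp
  exact DFunLike.congr_fun hcomp f

lemma psiEquiv_deg (B B' : Fin m → Matrix (Fin n) (Fin n) k)
    (h1 : ∀ j, B' j * B j = 1) (h2 : ∀ j, B j * B' j = 1)
    (f : MvPolynomial (Fin n × Fin m) k) :
    ((psiEquiv B B' h1 h2) f).totalDegree = f.totalDegree := by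
  have hco : (psiEquiv B B' h1 h2) f = psiHom B f := rfl
  refine le_antisymm (hco ▸ psiHom_deg_le B f) ?_
  conv_lhs => rw [← psiHom_inv_apply B B' h2 f]
  exact hco ▸ psiHom_deg_le B' (psiHom B f)

lemma psiHom_rename [NeZero m] (B : Fin m → Matrix (Fin n) (Fin n) k) (g : MvPolynomial (Fin n) k) :
    psiHom B (rename (fun i : Fin n => (i, (0 : Fin m))) g) =
      rename (fun i : Fin n => (i, (0 : Fin m))) (polyComp (B 0) g) := by
  have : (psiHom B).comp (rename (fun i : Fin n => (i, (0 : Fin m)))) =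
      (rename (fun i : Fin n => (i, (0 : Fin m)))).comp
        (aeval fun i => ∑ l, C (B 0 i l) * X l) := by
    apply algHom_ext
    intro i
    simp [psiHom_X, aeval_X]
  exact DFunLike.congr_fun this g

end Psi

section Frob

variable {k : Type*} [Field k] {n m : ℕ} {p : ℕ} [Fact p.Prime] [CharP k p] [NeZero m]

lemma psiHom_frobMap_e (hpow : ∀ a : k, a ^ p ^ m = a)
    (M : Matrix (Fin n) (Fin n) k) (i : Fin n) (j : Fin m) :
    psiHom (fun j' : Fin m => M.map (· ^ p ^ (j' : ℕ))) (X (i, j) ^ p - X (i, j + 1)) =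
      ∑ l, C (M i l ^ p ^ ((j + 1 : Fin m) : ℕ)) * (X (l, j) ^ p - X (l, j + 1)) := by
  have hwrap : ∀ a : k, a ^ p ^ ((j : ℕ) + 1) = a ^ p ^ ((j + 1 : Fin m) : ℕ) := by
    intro a
    have hval : ((j + 1 : Fin m) : ℕ) = ((j : ℕ) + 1) % m := by
      rw [Fin.val_add, Fin.val_one', Nat.add_mod_mod]
    rcases Nat.lt_or_ge ((j : ℕ) + 1) m with h | h
    · rw [hval, Nat.mod_eq_of_lt h]
    · have hm : (j : ℕ) + 1 = m := le_antisymm j.isLt h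
      rw [hval, hm, Nat.mod_self, pow_zero, pow_one]
      exact hpow a
  rw [map_sub, map_pow, psiHom_X, psiHom_X]
  simp only [Matrix.map_apply]
  have key : (∑ l, C (M i l ^ p ^ (j : ℕ)) * X (l, j)) ^ p =
      ∑ l, C (M i l ^ p ^ ((j + 1 : Fin m) : ℕ)) * X (l, j) ^ p := by
    rw [sum_pow_char]
    refine Finset.sum_congr rfl fun l _ => ?_
    rw [mul_pow, ← map_pow, ← pow_mul, ← pow_succ, hwrap]
  rw [key]
  simp only [mul_sub, Finset.sum_sub_distrib]

end Frob

section PsiSymm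

variable {k : Type*} [Field k] {n m : ℕ}

lemma psiEquiv_apply (B B' : Fin m → Matrix (Fin n) (Fin n) k)
    (h1 : ∀ j, B' j * B j = 1) (h2 : ∀ j, B j * B' j = 1)
    (f : MvPolynomial (Fin n × Fin m) k) :
    (psiEquiv B B' h1 h2) f = psiHom B f := rfl

lemma psiEquiv_symm_apply (B B' : Fin m → Matrix (Fin n) (Fin n) k)
    (h1 : ∀ j, B' j * B j = 1) (h2 : ∀ j, B j * B' j = 1)
    (f : MvPolynomial (Fin n × Fin m) k) :
    (psiEquiv B B' h1 h2).symm f = psiHom B' f := rfl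

end PsiSymm

/-- Over `k = 𝔽_{p^m}`, working in `k[x_{ij}]` (variables indexed by
`Fin n × Fin m`, with `g(x₁,…,xₙ)` identified with `g(x_{10},…,x_{n0})`), and with
`ℰ' = {x_{ij}^p − x_{i,j+1}}` (second index mod `m`), the last fall degree of
`ℱ ∪ ℰ'` equals that of `λ*(ℱ) ∪ ℰ'` for any `λ ∈ GLₙ(k)`. -/
theorem lastFallDegree_reduced_field_equations_invariant
    (k : Type*) [Field k] [Fintype k] (p n m : ℕ) [NeZero m] (hp : p.Prime)
    (hcard : Fintype.card k = p ^ m)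
    (lam : GL (Fin n) k)
    (F : Set (MvPolynomial (Fin n) k)) (hFfin : F.Finite) :
    lastFallDegree
        ((rename (fun i : Fin n => (i, (0 : Fin m)))) '' F ∪
          Set.range (fun x : Fin n × Fin m =>
            (X x : MvPolynomial (Fin n × Fin m) k) ^ p - X (x.1, x.2 + 1))) =
      lastFallDegree
        ((rename (fun i : Fin n => (i, (0 : Fin m)))) ''
            (polyComp (lam : Matrix (Fin n) (Fin n) k) '' F) ∪
          Set.range (fun x : Fin n × Fin m =>
            (X x : MvPolynomial (Fin n × Fin m) k) ^ p - X (x.1, x.2 + 1))) := by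
  classical
  haveI : Fact p.Prime := ⟨hp⟩
  haveI hchar : CharP k p := by
    obtain ⟨r, hr⟩ := CharP.exists k
    haveI := hr
    obtain ⟨nn, hrp, hcard'⟩ := FiniteField.card k r
    have hdvd : p ∣ r ^ (nn : ℕ) := by
      rw [← hcard', hcard]
      exact dvd_pow_self p (NeZero.ne m)
    have hpr : p = r := (Nat.prime_dvd_prime_iff_eq hp hrp).1 (hp.dvd_of_dvd_pow hdvd)
    exact hpr ▸ hr
  have hpow : ∀ a : k, a ^ p ^ m = a := fun a => by rw [← hcard]; exact FiniteField.pow_card a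
  set M : Matrix (Fin n) (Fin n) k := (lam : Matrix (Fin n) (Fin n) k) with hMdef
  set Minv : Matrix (Fin n) (Fin n) k := ((lam⁻¹ : GL (Fin n) k) : Matrix (Fin n) (Fin n) k)
    with hMinvdef
  have hMM : Minv * M = 1 := lam.inv_mul
  have hMM' : M * Minv = 1 := lam.mul_inv
  set B : Fin m → Matrix (Fin n) (Fin n) k := fun j => M.map (· ^ p ^ (j : ℕ)) with hBdef
  set B' : Fin m → Matrix (Fin n) (Fin n) k := fun j => Minv.map (· ^ p ^ (j : ℕ)) with hB'def
  have hfrob : ∀ j : ℕ, (fun a : k => a ^ p ^ j) = ⇑(iterateFrobenius k p j) := by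
    intro j; funext a; rw [iterateFrobenius_def]
  have hmapmul : ∀ (j : ℕ) (P Q : Matrix (Fin n) (Fin n) k),
      (P * Q).map (· ^ p ^ j) = P.map (· ^ p ^ j) * Q.map (· ^ p ^ j) := by
    intro j P Q; rw [hfrob j, Matrix.map_mul]
  have hmapone : ∀ j : ℕ, (1 : Matrix (Fin n) (Fin n) k).map (· ^ p ^ j) = 1 := by
    intro j
    refine Matrix.map_one _ ?_ ?_
    · exact zero_pow (pow_ne_zero j hp.ne_zero)
    · exact one_pow _
  have hBB : ∀ j : Fin m, B' j * B j = 1 := fun j => by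
    rw [hBdef, hB'def]; dsimp only; rw [← hmapmul, hMM, hmapone]
  have hBB' : ∀ j : Fin m, B j * B' j = 1 := fun j => by
    rw [hBdef, hB'def]; dsimp only; rw [← hmapmul, hMM', hmapone]
  set φ := psiEquiv B B' hBB hBB' with hφdef
  have hdeg : ∀ f, (φ f).totalDegree = f.totalDegree := psiEquiv_deg B B' hBB hBB'
  set A : Set (MvPolynomial (Fin n × Fin m) k) :=
    (rename (fun i : Fin n => (i, (0 : Fin m)))) '' F with hAdef
  set A' : Set (MvPolynomial (Fin n × Fin m) k) :=
    (rename (fun i : Fin n => (i, (0 : Fin m)))) '' (polyComp M '' F) with hA'def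
  set E : Set (MvPolynomial (Fin n × Fin m) k) :=
    Set.range (fun x : Fin n × Fin m =>
      (X x : MvPolynomial (Fin n × Fin m) k) ^ p - X (x.1, x.2 + 1)) with hEdef
  have hB0 : B 0 = M := by
    ext i l
    simp [hBdef, Matrix.map_apply]
  have h0 : ⇑φ '' (A ∪ E) = A' ∪ ⇑φ '' E := by
    rw [Set.image_union]
    congr 1
    rw [hAdef, hA'def, Set.image_image, Set.image_image]
    refine Set.image_congr fun g _ => ?_
    rw [hφdef, psiEquiv_apply, psiHom_rename, hB0]
  have hdegE : ∀ x : Fin n × Fin m,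
      ((X x : MvPolynomial (Fin n × Fin m) k) ^ p - X (x.1, x.2 + 1)).totalDegree = p := by
    intro x
    rw [sub_eq_add_neg, totalDegree_add_eq_left_of_totalDegree_lt, totalDegree_X_pow]
    rw [totalDegree_neg, totalDegree_X, totalDegree_X_pow]
    exact hp.one_lt
  have hφC : ∀ a : k, φ (C a) = C a := by
    intro a
    rw [hφdef, psiEquiv_apply]
    exact psiHom_C B a
  have hEdecomp : ∀ x : Fin n × Fin m,
      ((X x : MvPolynomial (Fin n × Fin m) k) ^ p - X (x.1, x.2 + 1)) =
        ∑ l, C (Minv x.1 l ^ p ^ ((x.2 + 1 : Fin m) : ℕ)) *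
          φ ((X (l, x.2) : MvPolynomial (Fin n × Fin m) k) ^ p - X (l, x.2 + 1)) := by
    intro x
    have h1 : φ.symm ((X x : MvPolynomial (Fin n × Fin m) k) ^ p - X (x.1, x.2 + 1)) =
        ∑ l, C (Minv x.1 l ^ p ^ ((x.2 + 1 : Fin m) : ℕ)) *
          ((X (l, x.2) : MvPolynomial (Fin n × Fin m) k) ^ p - X (l, x.2 + 1)) := by
      rw [hφdef, psiEquiv_symm_apply]
      exact psiHom_frobMap_e hpow Minv x.1 x.2
    calc (X x : MvPolynomial (Fin n × Fin m) k) ^ p - X (x.1, x.2 + 1)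
        = φ (φ.symm ((X x : MvPolynomial (Fin n × Fin m) k) ^ p - X (x.1, x.2 + 1))) :=
          (φ.apply_symm_apply _).symm
      _ = φ (∑ l, C (Minv x.1 l ^ p ^ ((x.2 + 1 : Fin m) : ℕ)) *
            ((X (l, x.2) : MvPolynomial (Fin n × Fin m) k) ^ p - X (l, x.2 + 1))) := by
          rw [h1]
      _ = _ := by
          rw [map_sum]
          exact Finset.sum_congr rfl fun l _ => by rw [map_mul, hφC]
  have hVsp : ∀ i, Vsp (A' ∪ ⇑φ '' E) i = Vsp (A' ∪ E) i := by
    intro i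
    refine Vsp_congr ?_ ?_
    · rintro f hf hd
      rcases hf with hf | ⟨e, ⟨x, rfl⟩, rfl⟩
      · exact Vsp_mem_of_mem (Or.inl hf) hd
      · have hdp : p ≤ i := by rwa [hdeg, hdegE] at hd
        dsimp only
        rw [hφdef, psiEquiv_apply, psiHom_frobMap_e hpow M x.1 x.2]
        refine Submodule.sum_mem _ fun l _ => ?_
        rw [← smul_eq_C_mul]
        refine Submodule.smul_mem _ _ (Vsp_mem_of_mem (Or.inr ⟨(l, x.2), rfl⟩) ?_)
        rw [hdegE (l, x.2)]
        exact hdp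
    · rintro f hf hd
      rcases hf with hf | ⟨x, rfl⟩
      · exact Vsp_mem_of_mem (Or.inl hf) hd
      · have hdp : p ≤ i := by rwa [hdegE] at hd
        dsimp only
        rw [hEdecomp x]
        refine Submodule.sum_mem _ fun l _ => ?_
        rw [← smul_eq_C_mul]
        refine Submodule.smul_mem _ _
          (Vsp_mem_of_mem (Or.inr ⟨_, ⟨(l, x.2), rfl⟩, rfl⟩) ?_)
        rw [hdeg, hdegE (l, x.2)]
        exact hdp
  calc lastFallDegree (A ∪ E)
      = lastFallDegree (⇑φ '' (A ∪ E)) := (lastFallDegree_map φ hdeg _).symm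
    _ = lastFallDegree (A' ∪ ⇑φ '' E) := by rw [h0]
    _ = lastFallDegree (A' ∪ E) := lastFallDegree_congr hVsp
end

section
/- Let k be a field and k̄ its algebraic closure. Suppose univariate polynomials f_i(x_i) of degree at most d_i over k̄ (in separate variables x_1,…,x_n) generate an ideal I ⊆ k̄[x_1,…,x_n] and each f_i factors as ∏_{α ∈ V_i}(x_i − α) over a finite set V_i ⊆ k̄ of distinct elements. Then a polynomial f ∈ k̄[x_1,…,x_n] with deg_{x_i} f < |V_i| for every i lies in I if and only if f = 0; equivalently, the reduction of any polynomial modulo the generators f_1(x_1),…,f_n(x_n) to a polynomial of degree < |V_i| in each x_i is zero exactly when the original polynomial lies in I. -/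
open MvPolynomial

/-- Grid lemma: a multivariate polynomial over a field whose degree in each
variable `i` is less than `(V i).card` and which vanishes on the grid
`∏ V i` must be zero. -/
lemma grid_vanish_eq_zero {K : Type*} [Field K] :
    ∀ (n : ℕ) (V : Fin n → Finset K) (f : MvPolynomial (Fin n) K),
    (∀ i, f.degreeOf i < (V i).card) →
    (∀ x : Fin n → K, (∀ i, x i ∈ V i) → eval x f = 0) → f = 0 := by
  intro n
  induction n with
  | zero =>
    intro V f _ hv
    obtain ⟨a, rfl⟩ := MvPolynomial.C_surjective (Fin 0) f
    have := hv (fun i => i.elim0) (fun i => i.elim0)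
    rw [eval_C] at this
    rw [this, map_zero]
  | succ n ih =>
    intro V f hdeg hv
    have hp : finSuccEquiv K n f = 0 := by
      ext j m
      suffices h : (finSuccEquiv K n f).coeff j = 0 by
        simp [h]
      apply ih (fun i => V i.succ)
      · intro i
        exact lt_of_le_of_lt (degreeOf_coeff_finSuccEquiv f i j) (hdeg i.succ)
      · intro y hy
        have hq : (finSuccEquiv K n f).map (eval y) = 0 := by
          apply Polynomial.eq_zero_of_natDegree_lt_card_of_eval_eq_zero' _ (V 0)
          · intro a ha
            rw [← eval_eq_eval_mv_eval']
            apply hv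
            intro i
            refine Fin.cases ?_ ?_ i
            · simpa using ha
            · intro j
              simpa using hy j
          · calc ((finSuccEquiv K n f).map (eval y)).natDegree
                ≤ (finSuccEquiv K n f).natDegree := Polynomial.natDegree_map_le
              _ = f.degreeOf 0 := natDegree_finSuccEquiv f
              _ < (V 0).card := hdeg 0
        have := congrArg (fun q => Polynomial.coeff q j) hq
        simpa [Polynomial.coeff_map] using this
    have := congrArg (finSuccEquiv K n).symm hp
    simpa using this

/-- Let `I ⊆ k̄[x₁,…,xₙ]` be the ideal generated by the univariate
polynomials `fᵢ(xᵢ) = ∏_{α ∈ Vᵢ}(xᵢ − α)`, where each `Vᵢ ⊆ k̄` is finite. Then a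
polynomial `f` with `deg_{xᵢ} f < |Vᵢ|` for every `i` lies in `I` iff `f = 0`. -/
theorem mem_ideal_iff_zero_of_degree_lt
    (k : Type*) [Field k] (K : Type*) [Field K] [Algebra k K] [IsAlgClosure k K]
    (n : ℕ) (V : Fin n → Finset K)
    (f : MvPolynomial (Fin n) K)
    (hdeg : ∀ i, f.degreeOf i < (V i).card) :
    f ∈ Ideal.span (Set.range fun i : Fin n =>
        (∏ α ∈ V i, (X i - C α) : MvPolynomial (Fin n) K)) ↔ f = 0 := by
  constructor
  · intro hf
    apply grid_vanish_eq_zero n V f hdeg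
    intro x hx
    have hker : Ideal.span (Set.range fun i : Fin n =>
        (∏ α ∈ V i, (X i - C α) : MvPolynomial (Fin n) K)) ≤
        RingHom.ker (eval x) := by
      rw [Ideal.span_le]
      rintro _ ⟨i, rfl⟩
      simp only [SetLike.mem_coe, RingHom.mem_ker, map_prod]
      exact Finset.prod_eq_zero (hx i) (by simp)
    exact hker hf
  · rintro rfl
    exact Ideal.zero_mem _
end
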